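/- Suppose x, u ∈ GF(2)^n and there exists an index i with 1 ≤ i ≤ n-1 such that (x_i, x_{i+1}) = (0,0) and (u_i, u_{i+1}) = (1,1), or (x_i, x_{i+1}) = (1,1) and (u_i, u_{i+1}) = (0,0). Then the grain error-balls B_{t,G}(x) and B_{t,G}(u) are disjoint. -/

import Mathlib

/-- `e` is a `t`-grain-error for `x`: weight at most `t`, `e₁ = 0`, and an error at
position `i` (2 ≤ i ≤ n) requires `x_i ≠ x_{i-1}`. (0-indexed here.) -/
def grainError {n : ℕ} (t : ℕ) (x e : Fin n → ZMod 2) : Prop :=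
  (Finset.univ.filter fun i => e i ≠ 0).card ≤ t ∧
  (∀ i : Fin n, (i : ℕ) = 0 → e i = 0) ∧
  (∀ i : Fin n, 0 < (i : ℕ) → e i ≠ 0 →
    x i ≠ x ⟨(i : ℕ) - 1, lt_of_le_of_lt (Nat.sub_le _ _) i.isLt⟩)

/-- The grain error-ball `B_{t,G}(x)`. -/
def grainBall {n : ℕ} (t : ℕ) (x : Fin n → ZMod 2) : Set (Fin n → ZMod 2) :=
  {y | ∃ e, grainError t x e ∧ y = x + e}

/-- The number of runs of a binary vector. -/
def runs {n : ℕ} (x : Fin n → ZMod 2) : ℕ :=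
  (if n = 0 then 0 else 1) +
  (Finset.univ.filter fun i : Fin n =>
    0 < (i : ℕ) ∧ x i ≠ x ⟨(i : ℕ) - 1, lt_of_le_of_lt (Nat.sub_le _ _) i.isLt⟩).card

theorem grainError.apply_succ_eq_zero {n t : ℕ} {x e : Fin n → ZMod 2} (he : grainError t x e)
    {i : ℕ} (hi : i + 1 < n) (hx : x ⟨i + 1, hi⟩ = x ⟨i, Nat.lt_of_succ_lt hi⟩) :
    e ⟨i + 1, hi⟩ = 0 := by
  by_contra hne
  exact he.2.2 ⟨i + 1, hi⟩ i.succ_pos hne hx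

theorem apply_succ_eq_of_mem_grainBall {n t : ℕ} {x y : Fin n → ZMod 2}
    (hy : y ∈ grainBall t x) {i : ℕ} (hi : i + 1 < n)
    (hx : x ⟨i + 1, hi⟩ = x ⟨i, Nat.lt_of_succ_lt hi⟩) :
    y ⟨i + 1, hi⟩ = x ⟨i + 1, hi⟩ := by
  obtain ⟨e, he, rfl⟩ := hy
  simp only [Pi.add_apply, he.apply_succ_eq_zero hi hx, add_zero]

theorem stmt2 {n t : ℕ} (x u : Fin n → ZMod 2) (i : ℕ) (hi : i + 1 < n)
    (h : (x ⟨i, by omega⟩ = 0 ∧ x ⟨i + 1, hi⟩ = 0 ∧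
            u ⟨i, by omega⟩ = 1 ∧ u ⟨i + 1, hi⟩ = 1) ∨
         (x ⟨i, by omega⟩ = 1 ∧ x ⟨i + 1, hi⟩ = 1 ∧
            u ⟨i, by omega⟩ = 0 ∧ u ⟨i + 1, hi⟩ = 0)) :
    Disjoint (grainBall t x) (grainBall t u) := by
  have hx : x ⟨i + 1, hi⟩ = x ⟨i, Nat.lt_of_succ_lt hi⟩ := by
    rcases h with ⟨h₀, h₁, -, -⟩ | ⟨h₀, h₁, -, -⟩ <;> rw [h₀, h₁]
  have hu : u ⟨i + 1, hi⟩ = u ⟨i, Nat.lt_of_succ_lt hi⟩ := by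
    rcases h with ⟨-, -, h₀, h₁⟩ | ⟨-, -, h₀, h₁⟩ <;> rw [h₀, h₁]
  have hxu : x ⟨i + 1, hi⟩ ≠ u ⟨i + 1, hi⟩ := by
    rcases h with ⟨-, h₁, -, h₂⟩ | ⟨-, h₁, -, h₂⟩ <;> rw [h₁, h₂] <;> decide
  refine Set.disjoint_left.2 fun y hyx hyu => hxu ?_
  rw [← apply_succ_eq_of_mem_grainBall hyx hi hx, apply_succ_eq_of_mem_grainBall hyu hi hu]
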